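/- If a family of subspaces {W_i}_{i=1}^M of an N-dimensional real inner product space does norm retrieval, then ∑_{i=1}^M dim W_i ≥ N. -/

import Mathlib

/-! A nonzero vector orthogonal to every `W i` would have the same projections as `0`, so a
family doing norm retrieval spans `H`; and the dimension of a sum of subspaces is at most the
sum of their dimensions. -/

open scoped RealInnerProductSpace

noncomputable section

/-- A family of subspaces of a finite-dimensional real inner product space does
norm retrieval (via their orthogonal projections) if equality of the norms of all the
orthogonal projections of two vectors implies equality of the norms of the vectors. -/
def DoesNormRetrieval {H : Type*} [NormedAddCommGroup H] [InnerProductSpace ℝ H]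
    [FiniteDimensional ℝ H] {ι : Type*} (W : ι → Submodule ℝ H) : Prop :=
  ∀ x y : H, (∀ i : ι, ‖(W i).orthogonalProjectionOnto x‖ = ‖(W i).orthogonalProjectionOnto y‖) →
    ‖x‖ = ‖y‖

namespace Submodule

variable {K V ι : Type*} [DivisionRing K] [AddCommGroup V] [Module K V] [FiniteDimensional K V]

theorem finrank_finset_sup_le_sum (W : ι → Submodule K V) (s : Finset ι) :
    Module.finrank K ↥(s.sup W) ≤ ∑ i ∈ s, Module.finrank K (W i) := by
  classical
  induction s using Finset.cons_induction with
  | empty => simp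
  | cons a s _ ih =>
    rw [Finset.sup_cons, Finset.sum_cons]
    exact (finrank_add_le_finrank_add_finrank _ _).trans (Nat.add_le_add_left ih _)

theorem finrank_iSup_le_sum [Fintype ι] (W : ι → Submodule K V) :
    Module.finrank K ↥(⨆ i, W i) ≤ ∑ i, Module.finrank K (W i) := by
  rw [← Finset.sup_univ_eq_iSup]
  exact finrank_finset_sup_le_sum W Finset.univ

end Submodule

theorem DoesNormRetrieval.iSup_eq_top {H ι : Type*} [NormedAddCommGroup H]
    [InnerProductSpace ℝ H] [FiniteDimensional ℝ H] {W : ι → Submodule ℝ H}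
    (hW : DoesNormRetrieval W) : ⨆ i, W i = ⊤ := by
  rw [← Submodule.orthogonal_eq_bot_iff, Submodule.eq_bot_iff]
  intro x hx
  have hx_perp (i : ι) : x ∈ (W i)ᗮ := Submodule.orthogonal_le (le_iSup W i) hx
  have hproj (i : ι) : (W i).orthogonalProjectionOnto x = 0 :=
    Submodule.orthogonalProjectionOnto_eq_zero_iff.mpr (hx_perp i)
  simpa using hW x 0 fun i => by rw [hproj, map_zero]

/-- If `{W_i}_{i=1}^M` does norm retrieval in an `N`-dimensional real inner product
space, then the dimensions of the subspaces sum to at least `N`. -/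
theorem stmt_8 {H : Type*} [NormedAddCommGroup H] [InnerProductSpace ℝ H]
    [FiniteDimensional ℝ H] {N M : ℕ} (hdim : Module.finrank ℝ H = N)
    (W : Fin M → Submodule ℝ H) (hW : DoesNormRetrieval W) :
    N ≤ ∑ i : Fin M, Module.finrank ℝ (W i) := by
  calc N = Module.finrank ℝ (⊤ : Submodule ℝ H) := by rw [finrank_top, hdim]
    _ = Module.finrank ℝ ↥(⨆ i, W i) := by rw [hW.iSup_eq_top]
    _ ≤ ∑ i : Fin M, Module.finrank ℝ (W i) := Submodule.finrank_iSup_le_sum W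

end
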